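/- Let G = (V, E, w, μ) be a submodular hypergraph. Then λ₂^{(1)} = inf over nonconstant x ∈ ℝ^N of 𝓡_1(x) = Q_1(x)/Z_{1,μ}(x), and this common value equals the 2-way Cheeger constant h₂. -/

import Mathlib

open scoped BigOperators
open Finset

noncomputable section

/-- A set function on the ground set `Fin N` is submodular:
`F(S ∪ T) + F(S ∩ T) ≤ F(S) + F(T)` for all `S, T`. -/
def Submodular {N : ℕ} (F : Finset (Fin N) → ℝ) : Prop :=
  ∀ S T : Finset (Fin N), F (S ∪ T) + F (S ∩ T) ≤ F S + F T

/-- The Lovász extension of a set function, written in its (tie-breaking independent)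
level-set integral form, which agrees with the usual sorted-sum definition
`f(x) = Σ_{j=1}^{N-1} F({i_1,…,i_j})(x_{i_j} − x_{i_{j+1}})` for a nonincreasing
ordering `x_{i_1} ≥ … ≥ x_{i_N}`. -/
def lovasz {N : ℕ} (F : Finset (Fin N) → ℝ) (x : Fin N → ℝ) : ℝ :=
  ∫ t in (⨅ v, x v)..(⨆ v, x v), F (Finset.univ.filter fun v => t < x v)

/-- The inner product `⟨y, x⟩ = Σ_v y_v x_v`. -/
def dotp {N : ℕ} (y x : Fin N → ℝ) : ℝ := ∑ v, y v * x v

/-- The set of subgradients of `f : ℝ^N → ℝ` at `x`. -/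
def subgradients {N : ℕ} (f : (Fin N → ℝ) → ℝ) (x : Fin N → ℝ) : Set (Fin N → ℝ) :=
  {y | ∀ x', dotp y (x' - x) ≤ f x' - f x}

/-- The base polytope of a set function: `y(S) ≤ F(S)` for all `S ⊆ V` and `y(V) = 0`. -/
def basePolytope {N : ℕ} (F : Finset (Fin N) → ℝ) : Set (Fin N → ℝ) :=
  {y | (∀ S : Finset (Fin N), ∑ v ∈ S, y v ≤ F S) ∧ ∑ v, y v = 0}

/-- The sign function (`sgn 0 = 0`). -/
def sgn (a : ℝ) : ℝ := if 0 < a then 1 else if a < 0 then -1 else 0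

/-- A vector is nonconstant. -/
def Nonconstant {N : ℕ} (x : Fin N → ℝ) : Prop := ∃ u v, x u ≠ x v

/-- Restriction of a vector to a subset of vertices (zero outside that subset). -/
def restrictVec {N : ℕ} (x : Fin N → ℝ) (C : Finset (Fin N)) : Fin N → ℝ :=
  fun v => if v ∈ C then x v else 0

/-- Euclidean norm on `ℝ^N`. -/
def l2norm {N : ℕ} (z : Fin N → ℝ) : ℝ := Real.sqrt (∑ v, z v ^ 2)

/-- Supremum norm on `ℝ^N`. -/
def linfNorm {N : ℕ} (z : Fin N → ℝ) : ℝ := ⨆ v, |z v|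

/-- A submodular hypergraph `G = (V, E, w, μ)` on `V = Fin N`: hyperedges `E`,
positive vertex weights `μ`, and for each hyperedge `e ∈ E` a scalar `θ_e > 0`
together with a normalized symmetric submodular weight `w_e : 2^e → [0,1]`
(extended to all of `2^V` by `w_e(S) = w_e(S ∩ e)`). -/
structure SubmodularHypergraph (N : ℕ) where
  E : Finset (Finset (Fin N))
  μ : Fin N → ℝ
  μ_pos : ∀ v, 0 < μ v
  θ : Finset (Fin N) → ℝ
  θ_pos : ∀ e ∈ E, 0 < θ e
  w : Finset (Fin N) → Finset (Fin N) → ℝ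
  w_inter : ∀ e ∈ E, ∀ S, w e S = w e (S ∩ e)
  w_submodular : ∀ e ∈ E, Submodular (w e)
  w_nonneg : ∀ e ∈ E, ∀ S, 0 ≤ w e S
  w_le_one : ∀ e ∈ E, ∀ S, w e S ≤ 1
  w_empty : ∀ e ∈ E, w e ∅ = 0
  w_normalized : ∀ e ∈ E, ∃ S ⊆ e, w e S = 1
  w_symm : ∀ e ∈ E, ∀ S ⊆ e, w e S = w e (e \ S)

namespace SubmodularHypergraph

variable {N : ℕ} (G : SubmodularHypergraph N)

/-- `vol(S) = Σ_{v ∈ S} μ_v`. -/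
def vol (S : Finset (Fin N)) : ℝ := ∑ v ∈ S, G.μ v

/-- `vol(∂S) = Σ_{e ∈ E} θ_e w_e(S)`. -/
def volB (S : Finset (Fin N)) : ℝ := ∑ e ∈ G.E, G.θ e * G.w e S

/-- The Lovász extension `f_e` of the hyperedge weight `w_e`. -/
def fe (e : Finset (Fin N)) (x : Fin N → ℝ) : ℝ := lovasz (G.w e) x

/-- `Q_p(x) = Σ_{e ∈ E} θ_e f_e(x)^p`. -/
def Q (p : ℝ) (x : Fin N → ℝ) : ℝ := ∑ e ∈ G.E, G.θ e * G.fe e x ^ p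

/-- `‖x‖_{ℓp,μ}^p = Σ_v μ_v |x_v|^p`. -/
def normLpPow (p : ℝ) (x : Fin N → ℝ) : ℝ := ∑ v, G.μ v * |x v| ^ p

/-- `G` is connected: `vol(∂S) > 0` for all nonempty proper `S ⊂ V`. -/
def Connected : Prop :=
  ∀ S : Finset (Fin N), S.Nonempty → S ≠ Finset.univ → 0 < G.volB S

/-- Vertices `u, v` are connected in `G`: every `S` with `u ∈ S`, `v ∉ S` has
`vol(∂S) > 0`. -/
def VertConnected (u v : Fin N) : Prop :=
  ∀ S : Finset (Fin N), u ∈ S → v ∉ S → 0 < G.volB S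

/-- The conductance `c(S) = vol(∂S) / min{vol(S), vol(V∖S)}`. -/
def conductance (S : Finset (Fin N)) : ℝ := G.volB S / min (G.vol S) (G.vol Sᶜ)

/-- The degree `d_v = Σ_{e ∈ E : v ∈ e} θ_e`. -/
def degree (v : Fin N) : ℝ := ∑ e ∈ G.E.filter (fun e => v ∈ e), G.θ e

/-- `τ = max_v d_v / μ_v`. -/
def tau : ℝ := ⨆ v, G.degree v / G.μ v

/-- `G` is homogeneous: `w_e(S) = 1` for every `S ∈ 2^e ∖ {∅, e}`. -/
def Homogeneous : Prop :=
  ∀ e ∈ G.E, ∀ S ⊆ e, S ≠ ∅ → S ≠ e → G.w e S = 1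

/-- `(λ, x)` is an eigenpair of the `p`-Laplacian `△_p` (for `p > 1` and for `p = 1`). -/
def IsEigenpair (p lam : ℝ) (x : Fin N → ℝ) : Prop :=
  x ≠ 0 ∧
  ∃ y : Finset (Fin N) → Fin N → ℝ,
    (∀ e ∈ G.E, y e ∈ basePolytope (G.w e) ∧
        ∀ z ∈ basePolytope (G.w e), dotp z x ≤ dotp (y e) x) ∧
    (if 1 < p then
        ∀ v, ∑ e ∈ G.E, G.θ e * G.fe e x ^ (p - 1) * y e v
              = lam * G.μ v * (|x v| ^ (p - 1) * sgn (x v))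
      else
        (∀ v, x v ≠ 0 → ∑ e ∈ G.E, G.θ e * y e v = lam * G.μ v * sgn (x v)) ∧
        (∀ v, x v = 0 → |∑ e ∈ G.E, G.θ e * y e v| ≤ lam * G.μ v))

/-- Vertices `u, v` are connected inside the induced sub-hypergraph `G[W]`
(the boundary volume in `G[W]` of `S ⊆ W` equals `Σ_{e ∈ E} θ_e w_e(S)`). -/
def VertConnectedIn (W : Finset (Fin N)) (u v : Fin N) : Prop :=
  u = v ∨ ∀ S ⊆ W, u ∈ S → v ∉ S → 0 < G.volB S

/-- `C` is (the vertex set of) a connected component of the induced sub-hypergraph `G[W]`. -/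
def IsComponent (W C : Finset (Fin N)) : Prop :=
  C ⊆ W ∧ C.Nonempty ∧
    (∀ u ∈ C, ∀ v ∈ C, G.VertConnectedIn W u v) ∧
    (∀ u ∈ C, ∀ v ∈ W, G.VertConnectedIn W u v → v ∈ C)

end SubmodularHypergraph

def posSupp {N : ℕ} (x : Fin N → ℝ) : Finset (Fin N) := Finset.univ.filter fun v => 0 < x v
def negSupp {N : ℕ} (x : Fin N → ℝ) : Finset (Fin N) := Finset.univ.filter fun v => x v < 0
def nonnegSupp {N : ℕ} (x : Fin N → ℝ) : Finset (Fin N) := Finset.univ.filter fun v => 0 ≤ x v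
def nonposSupp {N : ℕ} (x : Fin N → ℝ) : Finset (Fin N) := Finset.univ.filter fun v => x v ≤ 0

namespace SubmodularHypergraph

variable {N : ℕ} (G : SubmodularHypergraph N)

/-- The number of strong nodal domains of `x` (positive ones plus negative ones). -/
def strongNodalCount (x : Fin N → ℝ) : ℕ :=
  {C : Finset (Fin N) | G.IsComponent (posSupp x) C}.ncard +
  {C : Finset (Fin N) | G.IsComponent (negSupp x) C}.ncard

/-- The number of weak nodal domains of `x` (positive ones plus negative ones). -/
def weakNodalCount (x : Fin N → ℝ) : ℕ :=
  {C : Finset (Fin N) | G.IsComponent (nonnegSupp x) C}.ncard +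
  {C : Finset (Fin N) | G.IsComponent (nonposSupp x) C}.ncard

/-- The collection of strong nodal domains of `x`. -/
def strongNodalDomains (x : Fin N → ℝ) : Set (Finset (Fin N)) :=
  {C | G.IsComponent (posSupp x) C ∨ G.IsComponent (negSupp x) C}

/-- The collection of weak nodal domains of `x`. -/
def weakNodalDomains (x : Fin N → ℝ) : Set (Finset (Fin N)) :=
  {C | G.IsComponent (nonnegSupp x) C ∨ G.IsComponent (nonposSupp x) C}

/-- `Z_{p,μ}(x) = min_c ‖x − c·𝟙‖_{ℓp,μ}^p`. -/
def Z (p : ℝ) (x : Fin N → ℝ) : ℝ := ⨅ c : ℝ, ∑ v, G.μ v * |x v - c| ^ p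

/-- `𝓡_p(x) = Q_p(x) / Z_{p,μ}(x)`. -/
def Rq (p : ℝ) (x : Fin N → ℝ) : ℝ := G.Q p x / G.Z p x

/-- The `k`-way Cheeger constant `h_k`. -/
def cheegerConst (k : ℕ) : ℝ :=
  sInf {c : ℝ | ∃ S : Fin k → Finset (Fin N),
    (∀ i, (S i).Nonempty) ∧ (∀ i j, i ≠ j → Disjoint (S i) (S j)) ∧
    c = ⨆ i, G.conductance (S i)}

end SubmodularHypergraph

/-- There is an odd continuous map `h : A → ℝ^k ∖ {0}`. -/
def genusLE {N : ℕ} (A : Set (Fin N → ℝ)) (k : ℕ) : Prop :=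
  ∃ h : (Fin N → ℝ) → (Fin k → ℝ),
    ContinuousOn h A ∧ (∀ x ∈ A, h (-x) = -h x) ∧ ∀ x ∈ A, h x ≠ 0

/-- The Krasnoselski genus of a set. -/
def genus {N : ℕ} (A : Set (Fin N → ℝ)) : ℕ∞ :=
  sInf ((fun n : ℕ => (n : ℕ∞)) '' {n | genusLE A n})

namespace SubmodularHypergraph

variable {N : ℕ} (G : SubmodularHypergraph N)

/-- The `k`-th variational eigenvalue `λ_k^{(p)}` of `△_p`:
`min` over closed symmetric `A ⊆ S_{p,μ}` with `γ(A) ≥ k` of `max_{x ∈ A} Q_p(x)`. -/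
def varEigen (p : ℝ) (k : ℕ) : ℝ :=
  sInf ((fun A : Set (Fin N → ℝ) => sSup (G.Q p '' A)) ''
    {A | IsClosed A ∧ (∀ x ∈ A, -x ∈ A) ∧
         A ⊆ {x | G.normLpPow p x = 1} ∧ (k : ℕ∞) ≤ genus A})

end SubmodularHypergraph

/-!
Coarea: `Q₁(x) = ∫ vol(∂{x > t}) dt`. Split the integral at a weighted median `c` of `x`:
every level set above `c` is the smaller side of its cut and every level set below `c` the
larger one, so each contributes at least `h₂` times the volume of its smaller side, and
integrating back gives `Q₁(x) ≥ h₂ Σ_v μ_v |x_v - c| ≥ h₂ Z_{1,μ}(x)`. Indicator vectors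
`1_S` give the converse `inf 𝓡₁ ≤ c(S)`.

For `λ₂`, the unit `ℓ1,μ`-sphere of the plane spanned by `1_S` and `1_{V∖S}` joins a point to
its antipode, so it has genus at least `2`, and `Q₁ ≤ c(S)` on it. Conversely, a set of genus
at least `2` contains a vector with median `0`: otherwise "the sign carrying more than half the
volume" is an odd continuous map to `{±1}`. The coarea bound at `c = 0` applies to it.
-/

open MeasureTheory Set Filter Topology
open scoped Pointwise

theorem Finset.exists_nonempty_ne_univ (α : Type*) [Fintype α] [Nontrivial α] :
    ∃ S : Finset α, S.Nonempty ∧ S ≠ Finset.univ := by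
  obtain ⟨u, v, huv⟩ := exists_pair_ne α
  exact ⟨{u}, Finset.singleton_nonempty u,
    fun h => huv (Finset.mem_singleton.1 (h ▸ Finset.mem_univ v)).symm⟩

theorem Finset.compl_nonempty_of_ne_univ {α : Type*} [Fintype α] [DecidableEq α]
    {S : Finset α} (h : S ≠ Finset.univ) : Sᶜ.Nonempty :=
  (Finset.compl_ne_univ_iff_nonempty Sᶜ).1 (by rwa [compl_compl])

theorem intervalIntegrable_of_finite_range {f : ℝ → ℝ} (hm : Measurable f)
    (hf : (range f).Finite) (a b : ℝ) : IntervalIntegrable f volume a b := by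
  obtain ⟨C, hC⟩ := (hf.image fun y => ‖y‖).bddAbove
  exact (intervalIntegrable_const (c := C)).mono_fun' hm.aestronglyMeasurable
    (ae_of_all _ fun t => hC (mem_image_of_mem _ (mem_range_self t)))

theorem intervalIntegrable_ite {p : ℝ → Prop} [DecidablePred p] (hp : MeasurableSet {t | p t})
    (k a b : ℝ) : IntervalIntegrable (fun t => if p t then k else 0) volume a b := by
  refine intervalIntegrable_of_finite_range (measurable_const.ite hp measurable_const)
    ((toFinite {k, 0}).subset ?_) a b
  rintro _ ⟨t, rfl⟩
  by_cases p t <;> simp [*]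

theorem integral_ite_lt {a b r : ℝ} (k : ℝ) (hab : a ≤ b) (hrb : r ≤ b) :
    ∫ t in a..b, (if t < r then k else 0) = max (r - a) 0 * k := by
  have hint := intervalIntegrable_ite (p := (· < r)) measurableSet_Iio k
  rw [← intervalIntegral.integral_add_adjacent_intervals (hint a (max a r)) (hint (max a r) b),
    intervalIntegral.integral_congr_Ioo_of_le (le_max_left a r) (g := fun _ => k)
      fun t ht => if_pos ((lt_max_iff.1 ht.2).resolve_left (not_lt.2 ht.1.le)),
    intervalIntegral.integral_congr_Ioo_of_le (max_le hab hrb) (g := fun _ => 0)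
      fun t ht => if_neg (not_lt.2 ((le_max_right a r).trans ht.1.le))]
  simp [← max_sub_sub_right, max_comm]

theorem integral_ite_le {a b r : ℝ} (k : ℝ) (hab : a ≤ b) (har : a ≤ r) :
    ∫ t in a..b, (if r ≤ t then k else 0) = max (b - r) 0 * k := by
  have hint := intervalIntegrable_ite (p := (r ≤ ·)) measurableSet_Ici k
  rw [← intervalIntegral.integral_add_adjacent_intervals (hint a (min b r)) (hint (min b r) b),
    intervalIntegral.integral_congr_Ioo_of_le (le_min hab har) (g := fun _ => 0)
      fun t ht => if_neg (not_le.2 (ht.2.trans_le (min_le_right b r))),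
    intervalIntegral.integral_congr_Ioo_of_le (min_le_left b r) (g := fun _ => k)
      fun t ht => if_pos ((min_lt_iff.1 ht.1).resolve_left (not_lt.2 ht.2.le)).le]
  simp [← max_sub_sub_left, max_comm]

section Genus

variable {N : ℕ} {A : Set (Fin N → ℝ)}

theorem genus_le_of_genusLE {k : ℕ} (h : genusLE A k) : genus A ≤ k :=
  sInf_le ⟨k, h, rfl⟩

theorem not_genusLE_one_of_two_le_genus (hA : 2 ≤ genus A) : ¬ genusLE A 1 := fun h =>
  absurd (hA.trans (genus_le_of_genusLE h)) (by decide)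

theorem two_le_genus_of_joinedIn {x : Fin N → ℝ} (hx : JoinedIn A x (-x)) : 2 ≤ genus A := by
  refine le_sInf ?_
  rintro _ ⟨n, ⟨h, hcont, hodd, hne⟩, rfl⟩
  match n with
  | 0 => exact absurd (Subsingleton.elim (h x) 0) (hne x hx.source_mem)
  | n + 2 => exact (Nat.cast_le.2 (Nat.le_add_left 2 n) : ((2 : ℕ) : ℕ∞) ≤ _)
  | 1 =>
    obtain ⟨γ, hγ⟩ := hx
    set H : unitInterval → ℝ := fun t => h (γ t) 0
    have hH : Continuous H := (continuous_apply 0).comp (hcont.comp_continuous γ.continuous hγ)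
    have hH1 : H 1 = -H 0 := by
      simp only [H, γ.source, γ.target, hodd x (γ.source ▸ hγ 0), Pi.neg_apply]
    obtain ⟨t, ht⟩ : (0 : ℝ) ∈ range H := by
      rcases le_total (H 0) 0 with h0 | h0
      · exact intermediate_value_univ 0 1 hH ⟨h0, by linarith⟩
      · exact intermediate_value_univ 1 0 hH ⟨by linarith, h0⟩
    exact (hne (γ t) (hγ t) (funext fun i => Subsingleton.elim i 0 ▸ ht)).elim

theorem genusLE_one_of_subset_union_neg {U : Set (Fin N → ℝ)} (hU : IsOpen U)
    (hdisj : Disjoint U (-U)) (hA : A ⊆ U ∪ -U) : genusLE A 1 := by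
  classical
  have hnotU : ∀ {x}, x ∈ -U → x ∉ U := fun hx hxU => disjoint_left.1 hdisj hxU hx
  refine ⟨fun x => if x ∈ U then 1 else -1, fun x hx => ?_, fun x hx => ?_, fun x _ => ?_⟩
  · refine ContinuousAt.continuousWithinAt ?_
    rcases hA hx with hxU | hxU
    · exact (continuousAt_const (y := 1)).congr
        (eventually_of_mem (hU.mem_nhds hxU) fun y hy => by simp [hy])
    · exact (continuousAt_const (y := -1)).congr
        (eventually_of_mem (hU.neg.mem_nhds hxU) fun y hy => by simp [hnotU hy])
  · rcases hA hx with hxU | hxU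
    · have : -x ∉ U := hnotU (by simpa using hxU)
      simp [hxU, this]
    · simp [hnotU hxU, Set.mem_neg.1 hxU]
  · dsimp only
    split_ifs <;> simp

end Genus

section Vectors

variable {N : ℕ}

theorem posSupp_neg (x : Fin N → ℝ) : posSupp (-x) = negSupp x := by
  ext v; simp [posSupp, negSupp]

theorem isOpen_setOf_posSupp {P : Finset (Fin N) → Prop} (hP : Monotone P) :
    IsOpen {x : Fin N → ℝ | P (posSupp x)} := by
  refine isOpen_iff_mem_nhds.2 fun x hx => ?_
  have hpos : ∀ᶠ y in 𝓝 x, ∀ v ∈ posSupp x, 0 < y v :=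
    (eventually_all_finset _).2 fun v hv =>
      (continuous_apply v).continuousAt.eventually (lt_mem_nhds (Finset.mem_filter.1 hv).2)
  exact hpos.mono fun y hy =>
    hP (fun v hv => Finset.mem_filter.2 ⟨Finset.mem_univ v, hy v hv⟩) hx

def superlevel (x : Fin N → ℝ) (t : ℝ) : Finset (Fin N) := Finset.univ.filter fun v => t < x v

theorem intervalIntegrable_superlevel (F : Finset (Fin N) → ℝ) (x : Fin N → ℝ) (a b : ℝ) :
    IntervalIntegrable (fun t => F (superlevel x t)) volume a b := by
  have hcomp : (fun t => F (superlevel x t))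
      = (fun b : Fin N → Bool => F (Finset.univ.filter fun v => b v)) ∘
        fun t v => decide (t < x v) := by
    ext t; simp [superlevel]
  refine intervalIntegrable_of_finite_range (f := fun t => F (superlevel x t)) ?_
    ((finite_range F).subset (range_comp_subset_range _ F)) a b
  rw [hcomp]
  exact (measurable_of_countable _).comp (measurable_pi_lambda _ fun v =>
    measurable_to_bool (by
      simp only [Set.preimage, mem_singleton_iff, decide_eq_true_eq]; exact measurableSet_Iio))

theorem lovasz_eq_integral (F : Finset (Fin N) → ℝ) (x : Fin N → ℝ) :
    lovasz F x = ∫ t in (⨅ v, x v)..(⨆ v, x v), F (superlevel x t) := rfl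

theorem lovasz_le_iSup_sub_iInf [Nonempty (Fin N)] {F : Finset (Fin N) → ℝ} (hF : ∀ S, F S ≤ 1)
    (x : Fin N → ℝ) : lovasz F x ≤ (⨆ v, x v) - ⨅ v, x v := by
  calc lovasz F x ≤ ∫ _ in (⨅ v, x v)..(⨆ v, x v), (1 : ℝ) :=
        intervalIntegral.integral_mono_on
          (ciInf_le_ciSup (Finite.bddBelow_range x) (Finite.bddAbove_range x))
          (intervalIntegrable_superlevel F x _ _) intervalIntegrable_const fun _ _ => hF _
    _ = (⨆ v, x v) - ⨅ v, x v := by simp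

theorem lovasz_nonneg [Nonempty (Fin N)] {F : Finset (Fin N) → ℝ} (hF : ∀ S, 0 ≤ F S)
    (x : Fin N → ℝ) : 0 ≤ lovasz F x :=
  intervalIntegral.integral_nonneg
    (ciInf_le_ciSup (Finite.bddBelow_range x) (Finite.bddAbove_range x)) fun _ _ => hF _

def twoValued (S : Finset (Fin N)) (α β : ℝ) : Fin N → ℝ := fun v => if v ∈ S then α else β

theorem twoValued_compl (S : Finset (Fin N)) (α β : ℝ) :
    twoValued Sᶜ β α = twoValued S α β := by
  ext v; by_cases hv : v ∈ S <;> simp [twoValued, hv]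

theorem smul_add_smul_twoValued (S : Finset (Fin N)) (a b α β α' β' : ℝ) :
    a • twoValued S α β + b • twoValued S α' β'
      = twoValued S (a * α + b * α') (a * β + b * β') := by
  ext v; by_cases hv : v ∈ S <;> simp [twoValued, hv]

theorem lovasz_twoValued (F : Finset (Fin N) → ℝ) {S : Finset (Fin N)} (hS : S.Nonempty)
    (hS' : S ≠ Finset.univ) {α β : ℝ} (hβα : β ≤ α) :
    lovasz F (twoValued S α β) = (α - β) * F S := by
  obtain ⟨u, hu⟩ := hS
  have : Nonempty (Fin N) := ⟨u⟩
  obtain ⟨v, hv⟩ := Finset.compl_nonempty_of_ne_univ hS'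
  rw [Finset.mem_compl] at hv
  have hsup : (⨆ w, twoValued S α β w) = α :=
    le_antisymm (ciSup_le fun w => by unfold twoValued; split_ifs <;> linarith)
      (le_ciSup_of_le (Finite.bddAbove_range _) u (by simp [twoValued, hu]))
  have hinf : (⨅ w, twoValued S α β w) = β :=
    le_antisymm (ciInf_le_of_le (Finite.bddBelow_range _) v (by simp [twoValued, hv]))
      (le_ciInf fun w => by unfold twoValued; split_ifs <;> linarith)
  rw [lovasz_eq_integral, hsup, hinf, intervalIntegral.integral_congr_Ioo_of_le hβα
    (g := fun _ => F S) fun t ht => ?_, intervalIntegral.integral_const, smul_eq_mul]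
  congr 1
  ext w
  rw [superlevel, Finset.mem_filter]
  by_cases hw : w ∈ S <;> simp [twoValued, hw, ht.2, ht.1.le]

end Vectors

namespace SubmodularHypergraph

variable {N : ℕ} (G : SubmodularHypergraph N)

theorem vol_nonneg (S : Finset (Fin N)) : 0 ≤ G.vol S :=
  Finset.sum_nonneg fun v _ => (G.μ_pos v).le

theorem vol_mono : Monotone G.vol := fun _ _ h =>
  Finset.sum_le_sum_of_subset_of_nonneg h fun v _ _ => (G.μ_pos v).le

theorem vol_pos {S : Finset (Fin N)} (h : S.Nonempty) : 0 < G.vol S :=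
  Finset.sum_pos (fun v _ => G.μ_pos v) h

theorem vol_add_vol_compl (S : Finset (Fin N)) : G.vol S + G.vol Sᶜ = G.vol Finset.univ :=
  Finset.sum_add_sum_compl S G.μ

theorem vol_posSupp_add_vol_negSupp_le (x : Fin N → ℝ) :
    G.vol (posSupp x) + G.vol (negSupp x) ≤ G.vol Finset.univ := by
  have hdisj : Disjoint (posSupp x) (negSupp x) :=
    Finset.disjoint_filter.2 fun v _ h1 h2 => lt_asymm h1 h2
  rw [vol, vol, ← Finset.sum_union hdisj]
  exact G.vol_mono (Finset.subset_univ _)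

theorem volB_nonneg (S : Finset (Fin N)) : 0 ≤ G.volB S :=
  Finset.sum_nonneg fun e he => mul_nonneg (G.θ_pos e he).le (G.w_nonneg e he S)

theorem w_compl {e : Finset (Fin N)} (he : e ∈ G.E) (S : Finset (Fin N)) :
    G.w e Sᶜ = G.w e S := by
  rw [G.w_inter e he S, G.w_inter e he Sᶜ, G.w_symm e he (S ∩ e) Finset.inter_subset_right]
  congr 1
  ext v
  simp only [Finset.mem_sdiff, Finset.mem_inter, Finset.mem_compl]
  tauto

theorem volB_compl (S : Finset (Fin N)) : G.volB Sᶜ = G.volB S :=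
  Finset.sum_congr rfl fun e he => by rw [G.w_compl he S]

theorem conductance_nonneg (S : Finset (Fin N)) : 0 ≤ G.conductance S :=
  div_nonneg (G.volB_nonneg S) (le_min (G.vol_nonneg S) (G.vol_nonneg Sᶜ))

theorem sum_mul_twoValued (g : ℝ → ℝ) (S : Finset (Fin N)) (α β : ℝ) :
    ∑ v, G.μ v * g (twoValued S α β v) = G.vol S * g α + G.vol Sᶜ * g β := by
  rw [← Finset.sum_add_sum_compl S, vol, vol, Finset.sum_mul, Finset.sum_mul]
  congr 1 <;> refine Finset.sum_congr rfl fun v hv => ?_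
  · rw [twoValued, if_pos hv]
  · rw [twoValued, if_neg (Finset.mem_compl.1 hv)]

@[simp] theorem Q_one (x : Fin N → ℝ) : G.Q 1 x = ∑ e ∈ G.E, G.θ e * G.fe e x := by
  simp [Q]

@[simp] theorem normLpPow_one (x : Fin N → ℝ) : G.normLpPow 1 x = ∑ v, G.μ v * |x v| := by
  simp [normLpPow]

@[simp] theorem Z_one (x : Fin N → ℝ) : G.Z 1 x = ⨅ c : ℝ, ∑ v, G.μ v * |x v - c| := by
  simp [Z]

theorem Q_one_nonneg [Nonempty (Fin N)] (x : Fin N → ℝ) : 0 ≤ G.Q 1 x := by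
  rw [Q_one]
  exact Finset.sum_nonneg fun e he =>
    mul_nonneg (G.θ_pos e he).le (lovasz_nonneg (G.w_nonneg e he) x)

theorem Q_one_eq_integral (x : Fin N → ℝ) :
    G.Q 1 x = ∫ t in (⨅ v, x v)..(⨆ v, x v), G.volB (superlevel x t) := by
  simp only [Q_one, volB]
  rw [intervalIntegral.integral_finsetSum
    fun e _ => intervalIntegrable_superlevel (fun S => G.θ e * G.w e S) x _ _]
  exact Finset.sum_congr rfl fun e _ => by
    rw [fe, lovasz_eq_integral, intervalIntegral.integral_const_mul]

theorem Q_one_twoValued {S : Finset (Fin N)} (hS : S.Nonempty) (hS' : S ≠ Finset.univ)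
    (α β : ℝ) : G.Q 1 (twoValued S α β) = |α - β| * G.volB S := by
  have hfe : ∀ e ∈ G.E, G.fe e (twoValued S α β) = |α - β| * G.w e S := fun e he => by
    rcases le_total β α with h | h
    · rw [fe, lovasz_twoValued _ hS hS' h, abs_of_nonneg (sub_nonneg.2 h)]
    · rw [← twoValued_compl, fe, lovasz_twoValued _ (Finset.compl_nonempty_of_ne_univ hS')
        ((Finset.compl_ne_univ_iff_nonempty S).2 hS) h, G.w_compl he,
        abs_of_nonpos (sub_nonpos.2 h), neg_sub]
  rw [Q_one, volB, Finset.mul_sum]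
  exact Finset.sum_congr rfl fun e he => by rw [hfe e he]; ring

theorem bddAbove_Q_one_image_sphere [Nonempty (Fin N)] :
    BddAbove (G.Q 1 '' {x | G.normLpPow 1 x = 1}) := by
  set R := ∑ u, (G.μ u)⁻¹
  have habs : ∀ x, G.normLpPow 1 x = 1 → ∀ v, |x v| ≤ R := fun x hx v => by
    have h1 : G.μ v * |x v| ≤ 1 := by
      rw [← hx, normLpPow_one]
      exact Finset.single_le_sum (f := fun v => G.μ v * |x v|)
        (fun u _ => mul_nonneg (G.μ_pos u).le (abs_nonneg _)) (Finset.mem_univ v)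
    calc |x v| ≤ (G.μ v)⁻¹ := by rw [← one_div, le_div_iff₀ (G.μ_pos v)]; linarith
      _ ≤ R := Finset.single_le_sum (f := fun u => (G.μ u)⁻¹)
        (fun u _ => inv_nonneg.2 (G.μ_pos u).le) (Finset.mem_univ v)
  refine ⟨(∑ e ∈ G.E, G.θ e) * (2 * R), ?_⟩
  rintro _ ⟨x, hx, rfl⟩
  have hsup : (⨆ v, x v) ≤ R := ciSup_le fun v => (le_abs_self _).trans (habs x hx v)
  have hinf : -R ≤ ⨅ v, x v := le_ciInf fun v => neg_le.1 ((neg_le_abs _).trans (habs x hx v))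
  rw [Q_one, Finset.sum_mul]
  refine Finset.sum_le_sum fun e he => mul_le_mul_of_nonneg_left ?_ (G.θ_pos e he).le
  linarith [show G.fe e x ≤ _ from lovasz_le_iSup_sub_iInf (G.w_le_one e he) x]

def cutConductances : Set ℝ :=
  {c | ∃ S : Finset (Fin N), S.Nonempty ∧ S ≠ Finset.univ ∧ c = G.conductance S}

theorem sInf_cutConductances_mem_lowerBounds :
    sInf G.cutConductances ∈ lowerBounds G.cutConductances :=
  fun _ hc => csInf_le ⟨0, by rintro _ ⟨S, -, -, rfl⟩; exact G.conductance_nonneg S⟩ hc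

theorem sInf_cutConductances_nonneg : 0 ≤ sInf G.cutConductances :=
  Real.sInf_nonneg (by rintro _ ⟨S, -, -, rfl⟩; exact G.conductance_nonneg S)

theorem mul_vol_le_volB [Nonempty (Fin N)] {h : ℝ} (hh : h ∈ lowerBounds G.cutConductances)
    {T : Finset (Fin N)} (hT : 2 * G.vol T ≤ G.vol Finset.univ) : h * G.vol T ≤ G.volB T := by
  rcases T.eq_empty_or_nonempty with rfl | hne
  · simpa [vol] using G.volB_nonneg ∅
  have hV := G.vol_pos Finset.univ_nonempty
  have hTc := G.vol_add_vol_compl T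
  have hnu : T ≠ Finset.univ := by rintro rfl; linarith
  have hcond := hh ⟨T, hne, hnu, rfl⟩
  rwa [conductance, min_eq_left (by linarith), le_div_iff₀ (G.vol_pos hne)] at hcond

def IsMedian (x : Fin N → ℝ) (c : ℝ) : Prop :=
  2 * G.vol (Finset.univ.filter fun v => c < x v) ≤ G.vol Finset.univ ∧
    2 * G.vol (Finset.univ.filter fun v => x v < c) ≤ G.vol Finset.univ

theorem exists_isMedian [Nonempty (Fin N)] (x : Fin N → ℝ) : ∃ c, G.IsMedian x c := by
  have hV := G.vol_pos Finset.univ_nonempty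
  -- the median is the largest value whose closed upper level set carries half the volume
  set P := Finset.univ.filter fun u =>
    G.vol Finset.univ ≤ 2 * G.vol (Finset.univ.filter fun v => x u ≤ x v)
  obtain ⟨u₀, -, hu₀⟩ := Finset.exists_min_image Finset.univ x Finset.univ_nonempty
  have hP : P.Nonempty := ⟨u₀, Finset.mem_filter.2 ⟨Finset.mem_univ _, by
    rw [Finset.filter_true_of_mem fun v _ => hu₀ v (Finset.mem_univ v)]; linarith⟩⟩
  obtain ⟨u, huP, hu⟩ := Finset.exists_max_image P x hP
  refine ⟨x u, ?_, ?_⟩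
  · by_contra! hgt
    have hne : (Finset.univ.filter fun v => x u < x v).Nonempty := by
      by_contra h
      rw [Finset.not_nonempty_iff_eq_empty.1 h, show G.vol ∅ = 0 from Finset.sum_empty] at hgt
      linarith
    obtain ⟨w, hw, hwmin⟩ := Finset.exists_min_image _ x hne
    have hwu := (Finset.mem_filter.1 hw).2
    have hset : (Finset.univ.filter fun v => x w ≤ x v)
        = Finset.univ.filter fun v => x u < x v := by
      ext v
      simp only [Finset.mem_filter, Finset.mem_univ, true_and]
      exact ⟨hwu.trans_le, fun hv => hwmin v (by simpa using hv)⟩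
    exact (hu w (Finset.mem_filter.2 ⟨Finset.mem_univ _, by rw [hset]; linarith⟩)).not_gt hwu
  · have hc := G.vol_add_vol_compl (Finset.univ.filter fun v => x u ≤ x v)
    rw [Finset.compl_filter] at hc
    simp only [not_le] at hc
    linarith [(Finset.mem_filter.1 huP).2]

theorem iInf_le_of_isMedian [Nonempty (Fin N)] {x : Fin N → ℝ} {c : ℝ}
    (hc : G.IsMedian x c) : (⨅ v, x v) ≤ c := by
  by_contra! hlt
  have h1 := hc.1
  rw [Finset.filter_true_of_mem fun v _ => hlt.trans_le (ciInf_le (Finite.bddBelow_range x) v)]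
    at h1
  linarith [G.vol_pos Finset.univ_nonempty]

theorem le_iSup_of_isMedian [Nonempty (Fin N)] {x : Fin N → ℝ} {c : ℝ}
    (hc : G.IsMedian x c) : c ≤ ⨆ v, x v := by
  by_contra! hlt
  have h2 := hc.2
  rw [Finset.filter_true_of_mem fun v _ => (le_ciSup (Finite.bddAbove_range x) v).trans_lt hlt]
    at h2
  linarith [G.vol_pos Finset.univ_nonempty]

theorem integral_vol_superlevel {x : Fin N → ℝ} {c M : ℝ} (hcM : c ≤ M) (hM : ∀ v, x v ≤ M) :
    ∫ t in c..M, G.vol (superlevel x t) = ∑ v, max (x v - c) 0 * G.μ v := by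
  simp only [vol, superlevel, Finset.sum_filter]
  rw [intervalIntegral.integral_finsetSum
    fun v _ => intervalIntegrable_ite (p := (· < x v)) measurableSet_Iio _ _ _]
  exact Finset.sum_congr rfl fun v _ => integral_ite_lt _ hcM (hM v)

theorem integral_vol_compl_superlevel {x : Fin N → ℝ} {m c : ℝ} (hmc : m ≤ c)
    (hm : ∀ v, m ≤ x v) :
    ∫ t in m..c, G.vol (superlevel x t)ᶜ = ∑ v, max (c - x v) 0 * G.μ v := by
  simp only [vol, superlevel, Finset.compl_filter, not_lt, Finset.sum_filter]
  rw [intervalIntegral.integral_finsetSum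
    fun v _ => intervalIntegrable_ite (p := (x v ≤ ·)) measurableSet_Ici _ _ _]
  exact Finset.sum_congr rfl fun v _ => integral_ite_le _ hmc (hm v)

theorem mul_sum_max_sub_le_integral_volB_above [Nonempty (Fin N)] {h : ℝ}
    (hh : h ∈ lowerBounds G.cutConductances) {x : Fin N → ℝ} {c : ℝ}
    (hc : 2 * G.vol (Finset.univ.filter fun v => c < x v) ≤ G.vol Finset.univ)
    (hcM : c ≤ ⨆ v, x v) :
    h * ∑ v, max (x v - c) 0 * G.μ v ≤ ∫ t in c..(⨆ v, x v), G.volB (superlevel x t) := by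
  rw [← G.integral_vol_superlevel hcM (le_ciSup (Finite.bddAbove_range x)),
    ← intervalIntegral.integral_const_mul]
  refine intervalIntegral.integral_mono_on hcM
    (intervalIntegrable_superlevel (fun S => h * G.vol S) x _ _)
    (intervalIntegrable_superlevel _ x _ _) fun t ht => G.mul_vol_le_volB hh (le_trans ?_ hc)
  gcongr
  exact G.vol_mono (Finset.monotone_filter_right _ fun v _ hv => ht.1.trans_lt hv)

theorem mul_sum_max_sub_le_integral_volB_below [Nonempty (Fin N)] {h : ℝ}
    (hh : h ∈ lowerBounds G.cutConductances) {x : Fin N → ℝ} {c : ℝ}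
    (hc : 2 * G.vol (Finset.univ.filter fun v => x v < c) ≤ G.vol Finset.univ)
    (hmc : (⨅ v, x v) ≤ c) :
    h * ∑ v, max (c - x v) 0 * G.μ v ≤ ∫ t in (⨅ v, x v)..c, G.volB (superlevel x t) := by
  rw [← G.integral_vol_compl_superlevel hmc (ciInf_le (Finite.bddBelow_range x)),
    ← intervalIntegral.integral_const_mul]
  -- at `t = c` the sublevel set `{x ≤ c}` may carry more than half the volume
  refine intervalIntegral.integral_mono_on_of_le_Ioo hmc
    (intervalIntegrable_superlevel (fun S => h * G.vol Sᶜ) x _ _)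
    (intervalIntegrable_superlevel _ x _ _) fun t ht => ?_
  rw [← G.volB_compl]
  refine G.mul_vol_le_volB hh (le_trans ?_ hc)
  gcongr
  refine G.vol_mono fun v hv => ?_
  simp only [superlevel, Finset.compl_filter, not_lt, Finset.mem_filter, Finset.mem_univ,
    true_and] at hv ⊢
  exact hv.trans_lt ht.2

theorem mul_sum_abs_sub_le_Q_one [Nonempty (Fin N)] {h : ℝ}
    (hh : h ∈ lowerBounds G.cutConductances) {x : Fin N → ℝ} {c : ℝ} (hc : G.IsMedian x c) :
    h * ∑ v, G.μ v * |x v - c| ≤ G.Q 1 x := by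
  calc h * ∑ v, G.μ v * |x v - c|
      = h * ∑ v, max (x v - c) 0 * G.μ v + h * ∑ v, max (c - x v) 0 * G.μ v := by
        rw [← mul_add, ← Finset.sum_add_distrib]
        congr 1
        refine Finset.sum_congr rfl fun v _ => ?_
        rw [← add_mul, ← neg_sub (x v), max_zero_add_max_neg_zero_eq_abs_self, mul_comm]
    _ ≤ (∫ t in c..(⨆ v, x v), G.volB (superlevel x t))
        + ∫ t in (⨅ v, x v)..c, G.volB (superlevel x t) :=
        add_le_add
          (G.mul_sum_max_sub_le_integral_volB_above hh hc.1 (G.le_iSup_of_isMedian hc))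
          (G.mul_sum_max_sub_le_integral_volB_below hh hc.2 (G.iInf_le_of_isMedian hc))
    _ = G.Q 1 x := by
      rw [add_comm, intervalIntegral.integral_add_adjacent_intervals
        (intervalIntegrable_superlevel _ x _ _) (intervalIntegrable_superlevel _ x _ _),
        G.Q_one_eq_integral]

theorem Z_one_le (x : Fin N → ℝ) (c : ℝ) : G.Z 1 x ≤ ∑ v, G.μ v * |x v - c| := by
  rw [Z_one]
  refine ciInf_le ⟨0, ?_⟩ c
  rintro _ ⟨d, rfl⟩
  exact Finset.sum_nonneg fun v _ => mul_nonneg (G.μ_pos v).le (abs_nonneg _)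

theorem Z_one_pos {x : Fin N → ℝ} (hx : Nonconstant x) : 0 < G.Z 1 x := by
  obtain ⟨u, v, huv⟩ := hx
  have hne : u ≠ v := fun h => huv (congrArg x h)
  set m := min (G.μ u) (G.μ v)
  have hm : 0 < m := lt_min (G.μ_pos u) (G.μ_pos v)
  rw [Z_one]
  refine (mul_pos hm (abs_pos.2 (sub_ne_zero.2 huv))).trans_le (le_ciInf fun c => ?_)
  calc m * |x u - x v| ≤ m * (|x u - c| + |x v - c|) := by
        gcongr
        simpa [abs_sub_comm c] using abs_sub_le (x u) c (x v)
    _ ≤ G.μ u * |x u - c| + G.μ v * |x v - c| := by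
        rw [mul_add]; gcongr; exacts [min_le_left _ _, min_le_right _ _]
    _ = ∑ w ∈ {u, v}, G.μ w * |x w - c| :=
        (Finset.sum_pair (f := fun w => G.μ w * |x w - c|) hne).symm
    _ ≤ ∑ w, G.μ w * |x w - c| :=
        Finset.sum_le_univ_sum_of_nonneg fun w => mul_nonneg (G.μ_pos w).le (abs_nonneg _)

theorem le_Rq_one [Nonempty (Fin N)] {h : ℝ} (hh : h ∈ lowerBounds G.cutConductances)
    (h0 : 0 ≤ h) {x : Fin N → ℝ} (hx : Nonconstant x) : h ≤ G.Rq 1 x := by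
  obtain ⟨c, hc⟩ := G.exists_isMedian x
  rw [Rq, le_div_iff₀ (G.Z_one_pos hx)]
  exact (mul_le_mul_of_nonneg_left (G.Z_one_le x c) h0).trans (G.mul_sum_abs_sub_le_Q_one hh hc)

theorem Rq_one_twoValued_le_conductance {S : Finset (Fin N)} (hS : S.Nonempty)
    (hS' : S ≠ Finset.univ) :
    G.Rq 1 (twoValued S 1 0) ≤ G.conductance S := by
  have hmin : 0 < min (G.vol S) (G.vol Sᶜ) :=
    lt_min (G.vol_pos hS) (G.vol_pos (Finset.compl_nonempty_of_ne_univ hS'))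
  have hZ : min (G.vol S) (G.vol Sᶜ) ≤ G.Z 1 (twoValued S 1 0) := by
    rw [Z_one]
    refine le_ciInf fun c => ?_
    rw [G.sum_mul_twoValued (fun a => |a - c|)]
    calc min (G.vol S) (G.vol Sᶜ) ≤ min (G.vol S) (G.vol Sᶜ) * (|1 - c| + |0 - c|) :=
          le_mul_of_one_le_right hmin.le (by simpa [abs_sub_comm] using abs_sub_le (1 : ℝ) c 0)
      _ ≤ G.vol S * |1 - c| + G.vol Sᶜ * |0 - c| := by
          rw [mul_add]; gcongr; exacts [min_le_left _ _, min_le_right _ _]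
  rw [Rq, conductance, G.Q_one_twoValued hS hS', sub_zero, abs_one, one_mul]
  exact div_le_div_of_nonneg_left (G.volB_nonneg S) hmin hZ

theorem sInf_Rq_one_eq_sInf_cutConductances [Nontrivial (Fin N)] :
    sInf {r : ℝ | ∃ x : Fin N → ℝ, Nonconstant x ∧ r = G.Rq 1 x} = sInf G.cutConductances := by
  obtain ⟨S, hS, hS'⟩ := Finset.exists_nonempty_ne_univ (Fin N)
  have hle : ∀ {x}, Nonconstant x → sInf G.cutConductances ≤ G.Rq 1 x := fun hx =>
    G.le_Rq_one G.sInf_cutConductances_mem_lowerBounds G.sInf_cutConductances_nonneg hx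
  have hnc : ∀ {T : Finset (Fin N)}, T.Nonempty → T ≠ Finset.univ →
      Nonconstant (twoValued T 1 0) := fun {T} ⟨u, hu⟩ hT' => by
    obtain ⟨v, hv⟩ := Finset.compl_nonempty_of_ne_univ hT'
    exact ⟨u, v, by simp [twoValued, hu, Finset.mem_compl.1 hv]⟩
  have hbdd : BddBelow {r : ℝ | ∃ x : Fin N → ℝ, Nonconstant x ∧ r = G.Rq 1 x} :=
    ⟨_, by rintro _ ⟨x, hx, rfl⟩; exact hle hx⟩
  refine le_antisymm (le_csInf ⟨_, S, hS, hS', rfl⟩ ?_) (le_csInf ⟨_, _, hnc hS hS', rfl⟩ ?_)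
  · rintro _ ⟨T, hT, hT', rfl⟩
    exact (csInf_le hbdd ⟨_, hnc hT hT', rfl⟩).trans
      (G.Rq_one_twoValued_le_conductance hT hT')
  · rintro _ ⟨x, hx, rfl⟩
    exact hle hx

theorem exists_isMedian_zero_of_two_le_genus {A : Set (Fin N → ℝ)} (hA : 2 ≤ genus A) :
    ∃ x ∈ A, G.IsMedian x 0 := by
  by_contra! hA'
  set U := {x : Fin N → ℝ | G.vol Finset.univ < 2 * G.vol (posSupp x)}
  have hnegU : -U = {x | G.vol Finset.univ < 2 * G.vol (negSupp x)} := by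
    ext x; simp [U, posSupp_neg]
  refine not_genusLE_one_of_two_le_genus hA (genusLE_one_of_subset_union_neg
    (isOpen_setOf_posSupp (P := fun S => G.vol Finset.univ < 2 * G.vol S)
      fun S T hST (h : _ < _) => h.trans_le (by gcongr; exact G.vol_mono hST))
    ?_ fun x hx => ?_)
  · rw [hnegU, Set.disjoint_left]
    intro x h1 h2
    linarith [G.vol_posSupp_add_vol_negSupp_le x, h1.out, h2.out]
  · rw [hnegU]
    by_contra! hx'
    simp only [mem_union, mem_ofPred_eq, not_or, not_lt] at hx'
    exact hA' x hx hx'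

theorem eq_zero_of_isMedian_zero [Subsingleton (Fin N)] {x : Fin N → ℝ}
    (hx : G.IsMedian x 0) : x = 0 := by
  funext v
  have hV := G.vol_pos ⟨v, Finset.mem_univ v⟩
  rcases lt_trichotomy (x v) 0 with hv | hv | hv
  · have h := hx.2
    rw [Finset.filter_true_of_mem fun u _ => Subsingleton.elim v u ▸ hv] at h
    linarith
  · exact hv
  · have h := hx.1
    rw [Finset.filter_true_of_mem fun u _ => Subsingleton.elim v u ▸ hv] at h
    linarith

def cutSphere (S : Finset (Fin N)) : Set (Fin N → ℝ) :=
  {x | (∀ u v, (u ∈ S ↔ v ∈ S) → x u = x v) ∧ G.normLpPow 1 x = 1}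

theorem twoValued_mem_cutSphere {S : Finset (Fin N)} {α β : ℝ} :
    twoValued S α β ∈ G.cutSphere S ↔ G.vol S * |α| + G.vol Sᶜ * |β| = 1 := by
  rw [cutSphere, mem_ofPred_eq, normLpPow_one, G.sum_mul_twoValued abs]
  exact and_iff_right fun u v huv => by simp [twoValued, huv]

theorem eq_twoValued_of_mem_cutSphere {S : Finset (Fin N)} {x : Fin N → ℝ}
    (hx : x ∈ G.cutSphere S) {u v : Fin N} (hu : u ∈ S) (hv : v ∉ S) :
    x = twoValued S (x u) (x v) := by
  ext w
  by_cases hw : w ∈ S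
  · simp only [twoValued, hw, if_true]; exact hx.1 w u (iff_of_true hw hu)
  · simp only [twoValued, hw, if_false]; exact hx.1 w v (iff_of_false hw hv)

theorem isClosed_cutSphere (S : Finset (Fin N)) : IsClosed (G.cutSphere S) := by
  rw [cutSphere, ofPred_and]
  refine IsClosed.inter ?_ (isClosed_eq ?_ continuous_const)
  · simp only [ofPred_forall]
    exact isClosed_iInter fun u => isClosed_iInter fun v => isClosed_iInter fun _ =>
      isClosed_eq (continuous_apply u) (continuous_apply v)
  · exact (show Continuous fun x : Fin N → ℝ => ∑ v, G.μ v * |x v| by fun_prop).congr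
      fun x => (G.normLpPow_one x).symm

theorem neg_mem_cutSphere {S : Finset (Fin N)} {x : Fin N → ℝ} (hx : x ∈ G.cutSphere S) :
    -x ∈ G.cutSphere S :=
  ⟨fun u v huv => by simp [hx.1 u v huv], by simpa using hx.2⟩

theorem two_le_genus_cutSphere {S : Finset (Fin N)} (hS : S.Nonempty) (hS' : S ≠ Finset.univ) :
    2 ≤ genus (G.cutSphere S) := by
  have hvS := G.vol_pos hS
  have hvSc := G.vol_pos (Finset.compl_nonempty_of_ne_univ hS')
  have hneg : -twoValued S (G.vol S)⁻¹ 0 = twoValued S (-(G.vol S)⁻¹) 0 := by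
    ext v; by_cases hv : v ∈ S <;> simp [twoValued, hv]
  refine two_le_genus_of_joinedIn (x := twoValued S (G.vol S)⁻¹ 0)
    ((JoinedIn.of_segment_subset (y := twoValued S 0 (G.vol Sᶜ)⁻¹) ?_).trans
      (JoinedIn.of_segment_subset ?_))
  all_goals
    refine (segment_subset_iff ℝ).2 fun a b ha hb hab => ?_
    try rw [hneg]
    rw [smul_add_smul_twoValued, twoValued_mem_cutSphere]
    simp only [mul_zero, add_zero, zero_add, abs_mul, abs_neg, abs_inv, abs_of_nonneg ha,
      abs_of_nonneg hb, abs_of_pos hvS, abs_of_pos hvSc]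
    field_simp
    linarith

theorem Q_one_le_conductance_of_mem_cutSphere {S : Finset (Fin N)} (hS : S.Nonempty)
    (hS' : S ≠ Finset.univ) {x : Fin N → ℝ} (hx : x ∈ G.cutSphere S) :
    G.Q 1 x ≤ G.conductance S := by
  obtain ⟨u, hu⟩ := hS
  obtain ⟨v, hv⟩ := Finset.compl_nonempty_of_ne_univ hS'
  rw [Finset.mem_compl] at hv
  have hxuv := G.eq_twoValued_of_mem_cutSphere hx hu hv
  have hnorm := hx
  rw [hxuv, twoValued_mem_cutSphere] at hnorm
  set m := min (G.vol S) (G.vol Sᶜ)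
  have hm : 0 < m := lt_min (G.vol_pos ⟨u, hu⟩) (G.vol_pos ⟨v, Finset.mem_compl.2 hv⟩)
  rw [hxuv, G.Q_one_twoValued ⟨u, hu⟩ hS', conductance, le_div_iff₀ hm]
  calc |x u - x v| * G.volB S * m ≤ (m * |x u| + m * |x v|) * G.volB S := by
        rw [← mul_add, mul_right_comm, mul_comm m]
        gcongr
        · exact G.volB_nonneg S
        · exact abs_sub _ _
    _ ≤ (G.vol S * |x u| + G.vol Sᶜ * |x v|) * G.volB S := by
        gcongr
        · exact G.volB_nonneg S
        exacts [min_le_left _ _, min_le_right _ _]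
    _ = G.volB S := by rw [hnorm, one_mul]

def minimaxFamily (p : ℝ) (k : ℕ) : Set (Set (Fin N → ℝ)) :=
  {A | IsClosed A ∧ (∀ x ∈ A, -x ∈ A) ∧ A ⊆ {x | G.normLpPow p x = 1} ∧ (k : ℕ∞) ≤ genus A}

theorem varEigen_eq_sInf (p : ℝ) (k : ℕ) :
    G.varEigen p k = sInf ((fun A => sSup (G.Q p '' A)) '' G.minimaxFamily p k) := rfl

theorem cutSphere_mem_minimaxFamily {S : Finset (Fin N)} (hS : S.Nonempty)
    (hS' : S ≠ Finset.univ) : G.cutSphere S ∈ G.minimaxFamily 1 2 :=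
  ⟨G.isClosed_cutSphere S, fun _ => G.neg_mem_cutSphere, fun _ hx => hx.2,
    by exact_mod_cast G.two_le_genus_cutSphere hS hS'⟩

theorem varEigen_one_two_le_conductance [Nonempty (Fin N)] {S : Finset (Fin N)}
    (hS : S.Nonempty) (hS' : S ≠ Finset.univ) : G.varEigen 1 2 ≤ G.conductance S := by
  have hbdd : BddBelow ((fun A => sSup (G.Q 1 '' A)) '' G.minimaxFamily 1 2) := by
    refine ⟨0, ?_⟩
    rintro _ ⟨A, -, rfl⟩
    exact Real.sSup_nonneg (by rintro _ ⟨x, -, rfl⟩; exact G.Q_one_nonneg x)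
  rw [varEigen_eq_sInf]
  refine (csInf_le hbdd ⟨_, G.cutSphere_mem_minimaxFamily hS hS', rfl⟩).trans ?_
  exact Real.sSup_le (by
    rintro _ ⟨x, hx, rfl⟩; exact G.Q_one_le_conductance_of_mem_cutSphere hS hS' hx)
    (G.conductance_nonneg S)

theorem le_sSup_Q_one_image [Nonempty (Fin N)] {h : ℝ}
    (hh : h ∈ lowerBounds G.cutConductances) {A : Set (Fin N → ℝ)}
    (hA : A ∈ G.minimaxFamily 1 2) : h ≤ sSup (G.Q 1 '' A) := by
  obtain ⟨-, -, hAS, hAg⟩ := hA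
  obtain ⟨x, hxA, hx⟩ := G.exists_isMedian_zero_of_two_le_genus (by exact_mod_cast hAg)
  have hQ := G.mul_sum_abs_sub_le_Q_one hh hx
  simp only [sub_zero, ← normLpPow_one, (hAS hxA).out, mul_one] at hQ
  exact hQ.trans (le_csSup (G.bddAbove_Q_one_image_sphere.mono (image_mono hAS)) ⟨x, hxA, rfl⟩)

theorem varEigen_one_two_eq_sInf_cutConductances [Nontrivial (Fin N)] :
    G.varEigen 1 2 = sInf G.cutConductances := by
  obtain ⟨S, hS, hS'⟩ := Finset.exists_nonempty_ne_univ (Fin N)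
  refine le_antisymm (le_csInf ⟨_, S, hS, hS', rfl⟩ ?_) ?_
  · rintro _ ⟨T, hT, hT', rfl⟩
    exact G.varEigen_one_two_le_conductance hT hT'
  · refine le_csInf ⟨_, _, G.cutSphere_mem_minimaxFamily hS hS', rfl⟩ ?_
    rintro _ ⟨A, hA, rfl⟩
    exact G.le_sSup_Q_one_image G.sInf_cutConductances_mem_lowerBounds hA

theorem minimaxFamily_one_two_eq_empty [Subsingleton (Fin N)] : G.minimaxFamily 1 2 = ∅ := by
  refine eq_empty_of_forall_notMem fun A ⟨_, _, hAS, hAg⟩ => ?_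
  obtain ⟨x, hxA, hx⟩ := G.exists_isMedian_zero_of_two_le_genus (by exact_mod_cast hAg)
  have h1 := (hAS hxA).out
  rw [G.eq_zero_of_isMedian_zero hx] at h1
  simp at h1

end SubmodularHypergraph

/-- `λ₂^{(1)} = inf over nonconstant x of 𝓡₁(x)`, and this common value
equals the 2-way Cheeger constant `h₂ = min over nonempty proper S of c(S)`. -/
theorem stmt14 {N : ℕ} (G : SubmodularHypergraph N) :
    G.varEigen 1 2 = sInf {r : ℝ | ∃ x : Fin N → ℝ, Nonconstant x ∧ r = G.Rq 1 x} ∧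
    G.varEigen 1 2
      = sInf {c : ℝ | ∃ S : Finset (Fin N),
          S.Nonempty ∧ S ≠ Finset.univ ∧ c = G.conductance S} := by
  rcases subsingleton_or_nontrivial (Fin N) with hN | hN
  · have hR : {r : ℝ | ∃ x : Fin N → ℝ, Nonconstant x ∧ r = G.Rq 1 x} = ∅ :=
      eq_empty_of_forall_notMem fun _ ⟨x, ⟨u, v, huv⟩, _⟩ =>
        huv (congrArg x (Subsingleton.elim u v))
    have hC : {c : ℝ | ∃ S : Finset (Fin N),
        S.Nonempty ∧ S ≠ Finset.univ ∧ c = G.conductance S} = ∅ :=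
      eq_empty_of_forall_notMem fun _ ⟨S, ⟨v, hv⟩, hS, _⟩ =>
        hS (Finset.eq_univ_of_forall fun u => Subsingleton.elim v u ▸ hv)
    rw [G.varEigen_eq_sInf, G.minimaxFamily_one_two_eq_empty, hR, hC, image_empty]
    exact ⟨rfl, rfl⟩
  · have heig := G.varEigen_one_two_eq_sInf_cutConductances
    exact ⟨heig.trans G.sInf_Rq_one_eq_sInf_cutConductances.symm, heig⟩
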